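/- arXiv:1210.2803 — 9 statements merged into one kernel-verified Lean document; each statement's English description precedes it below -/
import Mathlib

section
/- Let p : G → H be a graph homomorphism between graphs. If for every vertex v of G the restriction p|_{N(v)} : N(v) → N(p(v)) is surjective and the restriction p|_{N₂(v)} : N₂(v) → N₂(p(v)) is injective, then p is a 2-covering map, i.e., both restrictions are bijective for every vertex v. -/
/-!
Injectivity on `N(v)` follows from injectivity on `N₂(w)` for any neighbour `w` of `v`,
because `N(v) ⊆ N₂(w)` in a symmetric graph. Surjectivity onto `N₂(p v)` follows by lifting
a path of length two in `H` one edge at a time, using surjectivity on first neighbourhoods.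
-/

/-- The neighborhood `N(v)` of a vertex in a graph given by its edge relation. -/
def Nbhd {V : Type*} (E : V → V → Prop) (v : V) : Set V := {w | E v w}

/-- The second neighborhood `N₂(v) = N(N(v))`. -/
def Nbhd2 {V : Type*} (E : V → V → Prop) (v : V) : Set V := {w | ∃ u, E v u ∧ E u w}

/-- A graph homomorphism between graphs given by edge relations. -/
def IsGraphHom {V W : Type*} (E : V → V → Prop) (F : W → W → Prop) (p : V → W) : Prop :=
  ∀ x y, E x y → F (p x) (p y)

/-- A 2-covering map: a graph homomorphism restricting to bijections
`N(v) → N(p v)` and `N₂(v) → N₂(p v)` for every vertex `v`. -/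
def IsTwoCovering {V W : Type*} (E : V → V → Prop) (F : W → W → Prop) (p : V → W) : Prop :=
  IsGraphHom E F p ∧
    ∀ v, Set.BijOn p (Nbhd E v) (Nbhd F (p v)) ∧ Set.BijOn p (Nbhd2 E v) (Nbhd2 F (p v))

section Neighbourhoods

variable {V W : Type*} {E : V → V → Prop} {F : W → W → Prop} {p : V → W}

theorem nbhd_subset_nbhd2_of_adj {v w : V} (hwv : E w v) : Nbhd E v ⊆ Nbhd2 E w :=
  fun _ hvx => ⟨v, hwv, hvx⟩

theorem IsGraphHom.mapsTo_nbhd (hp : IsGraphHom E F p) (v : V) :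
    Set.MapsTo p (Nbhd E v) (Nbhd F (p v)) :=
  fun w hvw => hp v w hvw

theorem IsGraphHom.mapsTo_nbhd2 (hp : IsGraphHom E F p) (v : V) :
    Set.MapsTo p (Nbhd2 E v) (Nbhd2 F (p v)) :=
  fun _ ⟨u, hvu, huw⟩ => ⟨p u, hp v u hvu, hp u _ huw⟩

theorem injOn_nbhd_of_injOn_nbhd2 (hEsymm : ∀ x y, E x y → E y x)
    (hinj : ∀ v, Set.InjOn p (Nbhd2 E v)) (v : V) : Set.InjOn p (Nbhd E v) :=
  fun w hw => (hinj w).mono (nbhd_subset_nbhd2_of_adj (hEsymm v w hw)) hw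

theorem surjOn_nbhd2_of_surjOn_nbhd (hsurj : ∀ v, Set.SurjOn p (Nbhd E v) (Nbhd F (p v)))
    (v : V) : Set.SurjOn p (Nbhd2 E v) (Nbhd2 F (p v)) := by
  rintro y ⟨u', hvu', hu'y⟩
  obtain ⟨u, hvu, rfl⟩ := hsurj v hvu'
  obtain ⟨w, huw, rfl⟩ := hsurj u hu'y
  exact ⟨w, ⟨u, hvu, huw⟩, rfl⟩

end Neighbourhoods

theorem two_covering_of_surjOn_injOn_general {V W : Type*} (E : V → V → Prop) (F : W → W → Prop)
    (hEsymm : ∀ x y, E x y → E y x)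
    (p : V → W) (hp : IsGraphHom E F p)
    (hsurj : ∀ v, Set.SurjOn p (Nbhd E v) (Nbhd F (p v)))
    (hinj : ∀ v, Set.InjOn p (Nbhd2 E v)) :
    IsTwoCovering E F p :=
  ⟨hp, fun v =>
    ⟨⟨hp.mapsTo_nbhd v, injOn_nbhd_of_injOn_nbhd2 hEsymm hinj v, hsurj v⟩,
      ⟨hp.mapsTo_nbhd2 v, hinj v, surjOn_nbhd2_of_surjOn_nbhd hsurj v⟩⟩⟩

/-- if for every vertex the restriction of `p` to `N(v)` is surjective onto
`N(p v)` and the restriction to `N₂(v)` is injective, then `p` is a 2-covering map. -/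
theorem two_covering_of_surjOn_injOn {V W : Type*} (E : V → V → Prop) (F : W → W → Prop)
    (hEsymm : ∀ x y, E x y → E y x) (hFsymm : ∀ x y, F x y → F y x)
    (p : V → W) (hp : IsGraphHom E F p)
    (hsurj : ∀ v, Set.SurjOn p (Nbhd E v) (Nbhd F (p v)))
    (hinj : ∀ v, Set.InjOn p (Nbhd2 E v)) :
    IsTwoCovering E F p :=
  two_covering_of_surjOn_injOn_general E F hEsymm p hp hsurj hinj
end

section
/- Homotopy lifting property for 2-coverings: let p : G → H be a 2-covering map and T a graph with no isolated vertices. Given a graph homomorphism F : T × I₁ → H and a graph homomorphism f : T → G with F(x,0) = p(f(x)) for all vertices x of T, there exists a unique graph homomorphism F̃ : T × I₁ → G with F̃(x,0) = f(x) for all x and p∘F̃ = F. -/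
namespace IsTwoCovering

variable {V W : Type*} {E : V → V → Prop} {F : W → W → Prop} {p : V → W}

theorem injOn_nbhd (hp : IsTwoCovering E F p) (v : V) : Set.InjOn p (Nbhd E v) :=
  (hp.2 v).1.injOn

theorem injOn_nbhd2 (hp : IsTwoCovering E F p) (v : V) : Set.InjOn p (Nbhd2 E v) :=
  (hp.2 v).2.injOn

theorem exists_lift_adj (hp : IsTwoCovering E F p) {v : V} {b : W} (h : F (p v) b) :
    ∃ w, E v w ∧ p w = b :=
  (hp.2 v).1.surjOn h

theorem adj_of_map_adj (hp : IsTwoCovering E F p) {a u v : V} (hau : E a u)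
    (hv : v ∈ Nbhd2 E a) (h : F (p u) (p v)) : E u v := by
  obtain ⟨w, huw, hw⟩ := hp.exists_lift_adj h
  have hw2 : w ∈ Nbhd2 E a := ⟨u, hau, huw⟩
  rwa [← hp.injOn_nbhd2 a hw2 hv hw]

end IsTwoCovering

section Cylinder

variable {VT VG : Type*} {ET : VT → VT → Prop} {E : VG → VG → Prop}

theorem isGraphHom_cylinder {g₀ g₁ : VT → VG} (h₀ : IsGraphHom ET E g₀)
    (h₁ : IsGraphHom ET E g₁) (h₀₁ : ∀ x y, ET x y → E (g₀ x) (g₁ y))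
    (h₁₀ : ∀ x y, ET x y → E (g₁ x) (g₀ y)) :
    IsGraphHom (fun a b : VT × Bool => ET a.1 b.1) E (fun a => cond a.2 (g₁ a.1) (g₀ a.1)) := by
  rintro ⟨x, _ | _⟩ ⟨y, _ | _⟩ hxy
  · exact h₀ x y hxy
  · exact h₀₁ x y hxy
  · exact h₁₀ x y hxy
  · exact h₁ x y hxy

variable {VH : Type*} {F : VH → VH → Prop} {p : VG → VH} {Fb : VT × Bool → VH} {f : VT → VG}

theorem exists_lift_top (hTsymm : ∀ x y, ET x y → ET y x) (hp : IsTwoCovering E F p)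
    (hFb : IsGraphHom (fun a b : VT × Bool => ET a.1 b.1) F Fb) (hf : IsGraphHom ET E f)
    (h0 : ∀ x, Fb (x, false) = p (f x)) {x y : VT} (hxy : ET x y) :
    ∃ u, p u = Fb (x, true) ∧ ∀ z, ET x z → E (f z) u := by
  have hbase : ∀ z, ET x z → F (p (f z)) (Fb (x, true)) := fun z hxz => by
    rw [← h0 z]
    exact hFb (z, false) (x, true) (hTsymm x z hxz)
  obtain ⟨u, hyu, hu⟩ := hp.exists_lift_adj (hbase y hxy)
  refine ⟨u, hu, fun z hxz => hp.adj_of_map_adj (hf x z hxz) ⟨f y, hf x y hxy, hyu⟩ ?_⟩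
  rw [hu]
  exact hbase z hxz

theorem isGraphHom_top (hTsymm : ∀ x y, ET x y → ET y x) (hp : IsTwoCovering E F p)
    (hFb : IsGraphHom (fun a b : VT × Bool => ET a.1 b.1) F Fb) (hf : IsGraphHom ET E f)
    {top : VT → VG} (htop : ∀ x, p (top x) = Fb (x, true))
    (htop_adj : ∀ x z, ET x z → E (f z) (top x)) : IsGraphHom ET E top := by
  intro x y hxy
  refine hp.adj_of_map_adj (htop_adj x y hxy)
    ⟨f x, hf y x (hTsymm x y hxy), htop_adj y x (hTsymm x y hxy)⟩ ?_
  rw [htop, htop]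
  exact hFb (x, true) (y, true) hxy

end Cylinder

theorem two_covering_homotopy_lifting_general {VT VG VH : Type*}
    (ET : VT → VT → Prop) (E : VG → VG → Prop) (F : VH → VH → Prop)
    (hTsymm : ∀ x y, ET x y → ET y x) (hEsymm : ∀ x y, E x y → E y x)
    (hTnoiso : ∀ x : VT, ∃ y, ET x y)
    (p : VG → VH) (hp : IsTwoCovering E F p)
    (Fb : VT × Bool → VH)
    (hFb : IsGraphHom (fun a b : VT × Bool => ET a.1 b.1) F Fb)
    (f : VT → VG) (hf : IsGraphHom ET E f)
    (h0 : ∀ x : VT, Fb (x, false) = p (f x)) :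
    ∃! Ft : VT × Bool → VG,
      IsGraphHom (fun a b : VT × Bool => ET a.1 b.1) E Ft ∧
        (∀ x : VT, Ft (x, false) = f x) ∧ p ∘ Ft = Fb := by
  choose nb hnb using hTnoiso
  choose top htop htop_adj using fun x => exists_lift_top hTsymm hp hFb hf h0 (hnb x)
  refine ⟨fun a => cond a.2 (top a.1) (f a.1), ⟨?_, fun x => rfl, ?_⟩, ?_⟩
  · exact isGraphHom_cylinder hf (isGraphHom_top hTsymm hp hFb hf htop htop_adj)
      (fun x y hxy => htop_adj y x (hTsymm x y hxy))
      (fun x y hxy => hEsymm _ _ (htop_adj x y hxy))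
  · funext ⟨x, i⟩
    cases i
    exacts [(h0 x).symm, htop x]
  · rintro Ft ⟨hFt, hFt0, hpFt⟩
    funext ⟨x, i⟩
    cases i
    · exact hFt0 x
    · have hlift : E (f (nb x)) (Ft (x, true)) := by
        rw [← hFt0]
        exact hFt (nb x, false) (x, true) (hTsymm x (nb x) (hnb x))
      exact hp.injOn_nbhd (f (nb x)) hlift (htop_adj x (nb x) (hnb x))
        ((congrFun hpFt (x, true)).trans (htop x).symm)

/-- homotopy lifting property for 2-covering maps. The graph `T × I₁` is
modelled on `VT × Bool`, where all pairs of elements of `Bool` are edges of `I₁`. -/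
theorem two_covering_homotopy_lifting {VT VG VH : Type*}
    (ET : VT → VT → Prop) (E : VG → VG → Prop) (F : VH → VH → Prop)
    (hTsymm : ∀ x y, ET x y → ET y x) (hEsymm : ∀ x y, E x y → E y x)
    (hFsymm : ∀ x y, F x y → F y x)
    (hTnoiso : ∀ x : VT, ∃ y, ET x y)
    (p : VG → VH) (hp : IsTwoCovering E F p)
    (Fb : VT × Bool → VH)
    (hFb : IsGraphHom (fun a b : VT × Bool => ET a.1 b.1) F Fb)
    (f : VT → VG) (hf : IsGraphHom ET E f)
    (h0 : ∀ x : VT, Fb (x, false) = p (f x)) :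
    ∃! Ft : VT × Bool → VG,
      IsGraphHom (fun a b : VT × Bool => ET a.1 b.1) E Ft ∧
        (∀ x : VT, Ft (x, false) = f x) ∧ p ∘ Ft = Fb :=
  two_covering_homotopy_lifting_general ET E F hTsymm hEsymm hTnoiso p hp Fb hFb f hf h0
end

section
/- Let G be a graph having no isolated vertices, Γ a group acting on G on the right by graph automorphisms. Then the action is a 2-covering action (i.e., N₂(v) ∩ N₂(vγ) = ∅ for every vertex v and every γ ≠ e) if and only if the action is free and the quotient map p : G → G/Γ is a 2-covering map. -/
namespace GraphAction

variable {V Γ : Type*}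

def orbitRel (act : V → Γ → V) : V → V → Prop := fun u u' => ∃ g : Γ, act u g = u'

def quotientAdj (E : V → V → Prop) (act : V → Γ → V) :
    Quot (orbitRel act) → Quot (orbitRel act) → Prop :=
  fun a b => ∃ x y : V, Quot.mk _ x = a ∧ Quot.mk _ y = b ∧ E x y

theorem nbhd2_nonempty {E : V → V → Prop} (hnoiso : ∀ v : V, ∃ w, E v w) (v : V) :
    (Nbhd2 E v).Nonempty := by
  obtain ⟨u, hvu⟩ := hnoiso v
  obtain ⟨w, huw⟩ := hnoiso u
  exact ⟨w, u, hvu, huw⟩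

theorem mem_nbhd2_act {E : V → V → Prop} {act : V → Γ → V}
    (hedge : ∀ x y g, E x y → E (act x g) (act y g)) {v w : V} (hw : w ∈ Nbhd2 E v) (g : Γ) :
    act w g ∈ Nbhd2 E (act v g) := by
  obtain ⟨u, hvu, huw⟩ := hw
  exact ⟨act u g, hedge v u g hvu, hedge u w g huw⟩

variable [Group Γ]

def IsFree (act : V → Γ → V) : Prop := ∀ (v : V) (γ : Γ), act v γ = v → γ = 1

def IsTwoCoveringAction (E : V → V → Prop) (act : V → Γ → V) : Prop :=
  ∀ (v : V) (γ : Γ), γ ≠ 1 → Nbhd2 E v ∩ Nbhd2 E (act v γ) = ∅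

variable {E : V → V → Prop} {act : V → Γ → V}

section Action

variable (hone : ∀ v, act v 1 = v) (hmul : ∀ v g h, act (act v g) h = act v (g * h))
include hone hmul

theorem act_act_inv (v : V) (g : Γ) : act (act v g) g⁻¹ = v := by
  rw [hmul, mul_inv_cancel, hone]

theorem orbitRel_equivalence : Equivalence (orbitRel act) where
  refl v := ⟨1, hone v⟩
  symm := fun ⟨g, hg⟩ => ⟨g⁻¹, hg ▸ act_act_inv hone hmul _ g⟩
  trans := fun ⟨g, hg⟩ ⟨h, hh⟩ => ⟨g * h, by rw [← hmul, hg, hh]⟩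

theorem quot_mk_eq_iff {x y : V} :
    Quot.mk (orbitRel act) x = Quot.mk _ y ↔ ∃ g, act x g = y :=
  Quot.eq.trans (orbitRel_equivalence hone hmul).eqvGen_iff

theorem quot_mk_act (v : V) (g : Γ) : Quot.mk (orbitRel act) (act v g) = Quot.mk _ v :=
  Quot.sound ⟨g⁻¹, act_act_inv hone hmul v g⟩

theorem injOn_quot_mk {s : Set V} (hs : ∀ w g, w ∈ s → act w g ∈ s → g = 1) :
    Set.InjOn (Quot.mk (orbitRel act)) s := by
  intro w hw w' hw' hww'
  obtain ⟨g, rfl⟩ := (quot_mk_eq_iff hone hmul).1 hww'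
  rw [hs w g hw hw', hone]

theorem exists_adj_quot_mk_eq (hedge : ∀ x y g, E x y → E (act x g) (act y g)) {v : V}
    {b : Quot (orbitRel act)} (hb : quotientAdj E act (Quot.mk _ v) b) :
    ∃ w, E v w ∧ Quot.mk _ w = b := by
  obtain ⟨x, y, hx, rfl, hxy⟩ := hb
  obtain ⟨g, rfl⟩ := (quot_mk_eq_iff hone hmul).1 hx
  exact ⟨act y g, hedge x y g hxy, quot_mk_act hone hmul y g⟩

theorem isTwoCovering_quot_mk_iff (hedge : ∀ x y g, E x y → E (act x g) (act y g)) :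
    IsTwoCovering E (quotientAdj E act) (Quot.mk (orbitRel act)) ↔
      ∀ v, Set.InjOn (Quot.mk (orbitRel act)) (Nbhd E v) ∧
        Set.InjOn (Quot.mk (orbitRel act)) (Nbhd2 E v) := by
  refine ⟨fun h v => ⟨(h.2 v).1.injOn, (h.2 v).2.injOn⟩,
    fun hinj => ⟨fun x y hxy => ⟨x, y, rfl, rfl, hxy⟩, fun v => ⟨⟨?_, (hinj v).1, ?_⟩,
      ⟨?_, (hinj v).2, ?_⟩⟩⟩⟩
  · exact fun w hw => ⟨v, w, rfl, rfl, hw⟩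
  · rintro b hb
    exact exists_adj_quot_mk_eq hone hmul hedge hb
  · rintro w ⟨u, hvu, huw⟩
    exact ⟨Quot.mk _ u, ⟨v, u, rfl, rfl, hvu⟩, ⟨u, w, rfl, rfl, huw⟩⟩
  · rintro c ⟨b, hb, hc⟩
    obtain ⟨u, hvu, rfl⟩ := exists_adj_quot_mk_eq hone hmul hedge hb
    obtain ⟨w, huw, rfl⟩ := exists_adj_quot_mk_eq hone hmul hedge hc
    exact ⟨w, ⟨u, hvu, huw⟩, rfl⟩

theorem isTwoCoveringAction_of_injOn (hedge : ∀ x y g, E x y → E (act x g) (act y g))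
    (hfree : IsFree act)
    (hinj : ∀ v, Set.InjOn (Quot.mk (orbitRel act)) (Nbhd2 E v)) :
    IsTwoCoveringAction E act := by
  refine fun v γ hγ => Set.eq_empty_of_forall_notMem fun w ⟨hv, hvγ⟩ => hγ ?_
  have hwγ : act w γ⁻¹ ∈ Nbhd2 E v := by
    simpa only [act_act_inv hone hmul] using mem_nbhd2_act hedge hvγ γ⁻¹
  have hfix : act w γ⁻¹ = w := hinj v hwγ hv (quot_mk_act hone hmul w γ⁻¹)
  exact inv_eq_one.1 (hfree w γ⁻¹ hfix)

end Action

namespace IsTwoCoveringAction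

theorem isFree (h : IsTwoCoveringAction E act) (hnoiso : ∀ v : V, ∃ w, E v w) : IsFree act := by
  intro v γ hfix
  by_contra hγ
  have hempty := h v γ hγ
  rw [hfix, Set.inter_self] at hempty
  exact (nbhd2_nonempty hnoiso v).ne_empty hempty

theorem eq_one_of_mem_nbhd2 (h : IsTwoCoveringAction E act)
    (hedge : ∀ x y g, E x y → E (act x g) (act y g)) {v w : V} {g : Γ}
    (hw : w ∈ Nbhd2 E v) (hwg : act w g ∈ Nbhd2 E v) : g = 1 := by
  by_contra hg
  have hcommon : act w g ∈ Nbhd2 E v ∩ Nbhd2 E (act v g) := ⟨hwg, mem_nbhd2_act hedge hw g⟩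
  rwa [h v g hg] at hcommon

theorem eq_one_of_mem_nbhd (h : IsTwoCoveringAction E act)
    (hedge : ∀ x y g, E x y → E (act x g) (act y g)) (hnoiso : ∀ v : V, ∃ w, E v w)
    {v w : V} {g : Γ} (hw : w ∈ Nbhd E v) (hwg : act w g ∈ Nbhd E v) : g = 1 := by
  by_contra hg
  obtain ⟨u, hu⟩ := hnoiso (act w g)
  have hcommon : u ∈ Nbhd2 E v ∩ Nbhd2 E (act v g) :=
    ⟨⟨act w g, hwg, hu⟩, ⟨act w g, hedge v w g hw, hu⟩⟩
  rwa [h v g hg] at hcommon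

end IsTwoCoveringAction

end GraphAction

open GraphAction in
theorem two_covering_action_iff_general {V : Type*} {Γ : Type*} [Group Γ]
    (E : V → V → Prop)
    (act : V → Γ → V)
    (hone : ∀ v, act v 1 = v)
    (hmul : ∀ v g h, act (act v g) h = act v (g * h))
    (hedge : ∀ x y g, E x y → E (act x g) (act y g))
    (hnoiso : ∀ v : V, ∃ w, E v w) :
    (∀ (v : V) (γ : Γ), γ ≠ 1 → Nbhd2 E v ∩ Nbhd2 E (act v γ) = ∅) ↔
      ((∀ (v : V) (γ : Γ), act v γ = v → γ = 1) ∧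
        IsTwoCovering E
          (fun a b => ∃ x y : V, Quot.mk (fun u u' => ∃ g : Γ, act u g = u') x = a ∧
            Quot.mk (fun u u' => ∃ g : Γ, act u g = u') y = b ∧ E x y)
          (Quot.mk (fun u u' => ∃ g : Γ, act u g = u'))) := by
  change IsTwoCoveringAction E act ↔
    IsFree act ∧ IsTwoCovering E (quotientAdj E act) (Quot.mk (orbitRel act))
  rw [isTwoCovering_quot_mk_iff hone hmul hedge]
  refine ⟨fun h => ⟨h.isFree hnoiso, fun v => ⟨?_, ?_⟩⟩,
    fun ⟨hfree, hinj⟩ => isTwoCoveringAction_of_injOn hone hmul hedge hfree fun v => (hinj v).2⟩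
  · exact injOn_quot_mk hone hmul fun _ _ => h.eq_one_of_mem_nbhd hedge hnoiso
  · exact injOn_quot_mk hone hmul fun _ _ => h.eq_one_of_mem_nbhd2 hedge

/-- for a graph without isolated vertices with a right action of a group Γ
by graph automorphisms, the action is a 2-covering action (second neighborhoods of
distinct translates are disjoint) iff the action is free and the quotient map to the
quotient graph is a 2-covering map. -/
theorem two_covering_action_iff {V : Type*} {Γ : Type*} [Group Γ]
    (E : V → V → Prop) (hsymm : ∀ x y, E x y → E y x)
    (act : V → Γ → V)
    (hone : ∀ v, act v 1 = v)
    (hmul : ∀ v g h, act (act v g) h = act v (g * h))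
    (hedge : ∀ x y g, E x y → E (act x g) (act y g))
    (hnoiso : ∀ v : V, ∃ w, E v w) :
    (∀ (v : V) (γ : Γ), γ ≠ 1 → Nbhd2 E v ∩ Nbhd2 E (act v γ) = ∅) ↔
      ((∀ (v : V) (γ : Γ), act v γ = v → γ = 1) ∧
        IsTwoCovering E
          (fun a b => ∃ x y : V, Quot.mk (fun u u' => ∃ g : Γ, act u g = u') x = a ∧
            Quot.mk (fun u u' => ∃ g : Γ, act u g = u') y = b ∧ E x y)
          (Quot.mk (fun u u' => ∃ g : Γ, act u g = u'))) :=
  two_covering_action_iff_general E act hone hmul hedge hnoiso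
end

section
/- Let G be a connected graph without isolated vertices, carrying an effective right action of a group Γ by graph automorphisms such that the quotient map G → G/Γ is a 2-covering map. Then the action is free. -/
/-!
If `γ` fixes a vertex `v`, then `γ` maps each neighbour `w` of `v` to a neighbour of `v` in the
same orbit as `w`; as the quotient map is injective on `N(v)`, `γ` fixes `w`. By connectedness `γ`
fixes every vertex, so `γ = 1` by effectiveness.
-/

open Function Relation

section DeckTransformation

variable {V W : Type*} {E : V → V → Prop} {f : V → V} {p : V → W}

theorem isFixedPt_of_reflTransGen (hf : IsGraphHom E E f) (hpf : p ∘ f = p)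
    (hp : ∀ a, Set.InjOn p (Nbhd E a)) {v b : V} (hv : IsFixedPt f v)
    (hvb : ReflTransGen E v b) : IsFixedPt f b := by
  induction hvb with
  | refl => exact hv
  | @tail a b _ hab ih =>
    have hfb : f b ∈ Nbhd E a := by
      have := hf a b hab
      rwa [ih] at this
    exact hp a hfb hab (congrFun hpf b)

theorem eq_id_of_isFixedPt (hconn : ∀ a b, ReflTransGen E a b) (hf : IsGraphHom E E f)
    (hpf : p ∘ f = p) (hp : ∀ a, Set.InjOn p (Nbhd E a)) {v : V} (hv : IsFixedPt f v) :
    f = id :=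
  funext fun b => isFixedPt_of_reflTransGen hf hpf hp hv (hconn v b)

end DeckTransformation

theorem free_of_effective_two_covering_quotient_general {V : Type*} {Γ : Type*} [Group Γ]
    (E : V → V → Prop)
    (hconn : ∀ a b : V, Relation.ReflTransGen E a b)
    (act : V → Γ → V)
    (hedge : ∀ x y g, E x y → E (act x g) (act y g))
    (heff : ∀ γ : Γ, (∀ v, act v γ = v) → γ = 1)
    (hquot : IsTwoCovering E
      (fun a b => ∃ x y : V, Quot.mk (fun u u' => ∃ g : Γ, act u g = u') x = a ∧
        Quot.mk (fun u u' => ∃ g : Γ, act u g = u') y = b ∧ E x y)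
      (Quot.mk (fun u u' => ∃ g : Γ, act u g = u'))) :
    ∀ (v : V) (γ : Γ), act v γ = v → γ = 1 := by
  intro v γ hfix
  have hγ : (act · γ) = id :=
    eq_id_of_isFixedPt hconn (fun x y => hedge x y γ)
      (funext fun x => (Quot.sound ⟨γ, rfl⟩).symm) (fun a => (hquot.2 a).1.injOn) hfix
  exact heff γ (congrFun hγ)

/-- an effective right action by graph automorphisms on a connected graph
without isolated vertices whose quotient map is a 2-covering map is free. -/
theorem free_of_effective_two_covering_quotient {V : Type*} {Γ : Type*} [Group Γ]
    (E : V → V → Prop) (hsymm : ∀ x y, E x y → E y x)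
    (hconn : ∀ a b : V, Relation.ReflTransGen E a b)
    (hnoiso : ∀ v : V, ∃ w, E v w)
    (act : V → Γ → V)
    (hone : ∀ v, act v 1 = v)
    (hmul : ∀ v g h, act (act v g) h = act v (g * h))
    (hedge : ∀ x y g, E x y → E (act x g) (act y g))
    (heff : ∀ γ : Γ, (∀ v, act v γ = v) → γ = 1)
    (hquot : IsTwoCovering E
      (fun a b => ∃ x y : V, Quot.mk (fun u u' => ∃ g : Γ, act u g = u') x = a ∧
        Quot.mk (fun u u' => ∃ g : Γ, act u g = u') y = b ∧ E x y)
      (Quot.mk (fun u u' => ∃ g : Γ, act u g = u'))) :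
    ∀ (v : V) (γ : Γ), act v γ = v → γ = 1 :=
  free_of_effective_two_covering_quotient_general E hconn act hedge heff hquot
end

section
/- Let f : G → H be a graph homomorphism and p : K → H a 2-covering map. Define the pullback graph f*K with vertices {(x,y) ∈ V(G)×V(K) | f(x) = p(y)} and edges ((x₁,y₁),(x₂,y₂)) iff (x₁,x₂) ∈ E(G) and (y₁,y₂) ∈ E(K). Then the first projection q : f*K → G, (x,y) ↦ x, is a 2-covering map. -/
/-!
A neighbour (or second neighbour) of `(x, y)` in `f*K` is determined by its first coordinate,
because its second coordinate lies in `N(y)` (or `N₂(y)`), on which `p` is injective, and is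
mapped by `p` to the image under `f` of the first coordinate. Conversely, a path `x, x₁, x₂` in `G` lifts step by
step to a path `y, y₁, y₂` in `K` by surjectivity of `p` on neighbourhoods, since `f` maps it to a
path in `H` starting at `f x = p y`.
-/

section Pullback

variable {VG VK VH : Type*} {EG : VG → VG → Prop} {EK : VK → VK → Prop} {EH : VH → VH → Prop}
  {f : VG → VH} {p : VK → VH}

variable (EG EK f p) in
def pullbackAdj (a b : {z : VG × VK // f z.1 = p z.2}) : Prop :=
  EG a.1.1 b.1.1 ∧ EK a.1.2 b.1.2

variable (f p) in
def pullbackFst (z : {z : VG × VK // f z.1 = p z.2}) : VG := z.1.1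

theorem pullback_ext_of_injOn {S : Set VK} (hS : S.InjOn p)
    {a b : {z : VG × VK // f z.1 = p z.2}} (ha : a.1.2 ∈ S) (hb : b.1.2 ∈ S)
    (h : pullbackFst f p a = pullbackFst f p b) : a = b :=
  Subtype.ext <| Prod.ext h <| hS ha hb <| by rw [← a.2, ← b.2]; exact congrArg f h

theorem exists_adj_lift (hf : IsGraphHom EG EH f)
    (hp : ∀ y, Set.SurjOn p (Nbhd EK y) (Nbhd EH (p y)))
    {x x' : VG} {y : VK} (hxy : f x = p y) (hx : EG x x') : ∃ y', EK y y' ∧ p y' = f x' :=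
  hp y (show EH (p y) (f x') from hxy ▸ hf x x' hx)

theorem isGraphHom_pullbackFst : IsGraphHom (pullbackAdj EG EK f p) EG (pullbackFst f p) :=
  fun _ _ h => h.1

theorem bijOn_pullbackFst_nbhd (hf : IsGraphHom EG EH f)
    (hp : ∀ y, Set.BijOn p (Nbhd EK y) (Nbhd EH (p y))) (a : {z : VG × VK // f z.1 = p z.2}) :
    Set.BijOn (pullbackFst f p) (Nbhd (pullbackAdj EG EK f p) a) (Nbhd EG (pullbackFst f p a)) := by
  refine ⟨fun b hb => hb.1, fun b hb c hc h => pullback_ext_of_injOn (hp _).injOn hb.2 hc.2 h, ?_⟩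
  intro x hx
  obtain ⟨y, hy, hpy⟩ := exists_adj_lift hf (fun y => (hp y).surjOn) a.2 hx
  exact ⟨⟨(x, y), hpy.symm⟩, ⟨hx, hy⟩, rfl⟩

theorem bijOn_pullbackFst_nbhd2 (hf : IsGraphHom EG EH f)
    (hp₁ : ∀ y, Set.SurjOn p (Nbhd EK y) (Nbhd EH (p y)))
    (hp₂ : ∀ y, Set.InjOn p (Nbhd2 EK y)) (a : {z : VG × VK // f z.1 = p z.2}) :
    Set.BijOn (pullbackFst f p) (Nbhd2 (pullbackAdj EG EK f p) a)
      (Nbhd2 EG (pullbackFst f p a)) := by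
  refine ⟨?_, ?_, ?_⟩
  · rintro b ⟨c, hac, hcb⟩
    exact ⟨pullbackFst f p c, hac.1, hcb.1⟩
  · rintro b ⟨c, hac, hcb⟩ b' ⟨c', hac', hcb'⟩ h
    exact pullback_ext_of_injOn (hp₂ _) ⟨_, hac.2, hcb.2⟩ ⟨_, hac'.2, hcb'.2⟩ h
  · rintro x₂ ⟨x₁, hx₁, hx₂⟩
    obtain ⟨y₁, hy₁, hpy₁⟩ := exists_adj_lift hf hp₁ a.2 hx₁
    obtain ⟨y₂, hy₂, hpy₂⟩ := exists_adj_lift hf hp₁ hpy₁.symm hx₂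
    exact ⟨⟨(x₂, y₂), hpy₂.symm⟩, ⟨⟨(x₁, y₁), hpy₁.symm⟩, ⟨hx₁, hy₁⟩, ⟨hx₂, hy₂⟩⟩, rfl⟩

theorem IsTwoCovering.pullback (hf : IsGraphHom EG EH f) (hp : IsTwoCovering EK EH p) :
    IsTwoCovering (pullbackAdj EG EK f p) EG (pullbackFst f p) :=
  ⟨isGraphHom_pullbackFst, fun a =>
    ⟨bijOn_pullbackFst_nbhd hf (fun y => (hp.2 y).1) a,
      bijOn_pullbackFst_nbhd2 hf (fun y => (hp.2 y).1.surjOn) (fun y => (hp.2 y).2.injOn) a⟩⟩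

end Pullback

theorem two_covering_pullback_general {VG VK VH : Type*}
    (EG : VG → VG → Prop) (EK : VK → VK → Prop) (EH : VH → VH → Prop)
    (f : VG → VH) (hf : IsGraphHom EG EH f)
    (p : VK → VH) (hp : IsTwoCovering EK EH p) :
    IsTwoCovering
      (fun a b : {z : VG × VK // f z.1 = p z.2} => EG a.1.1 b.1.1 ∧ EK a.1.2 b.1.2)
      EG (fun z => z.1.1) :=
  hp.pullback hf

/-- the pullback of a 2-covering map along a graph homomorphism is
a 2-covering map (via the first projection). -/
theorem two_covering_pullback {VG VK VH : Type*}
    (EG : VG → VG → Prop) (EK : VK → VK → Prop) (EH : VH → VH → Prop)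
    (hGsymm : ∀ x y, EG x y → EG y x) (hKsymm : ∀ x y, EK x y → EK y x)
    (hHsymm : ∀ x y, EH x y → EH y x)
    (f : VG → VH) (hf : IsGraphHom EG EH f)
    (p : VK → VH) (hp : IsTwoCovering EK EH p) :
    IsTwoCovering
      (fun a b : {z : VG × VK // f z.1 = p z.2} => EG a.1.1 b.1.1 ∧ EK a.1.2 b.1.2)
      EG (fun z => z.1.1) :=
  two_covering_pullback_general EG EK EH f hf p hp
end

section
/- The equivalence relation on paths generated by conditions (i) and (ii)' coincides with the 2-homotopy relation generated by (i) and (ii), where (ii)' requires l(φ)=l(ψ) and φ(i)=ψ(i) for all i except possibly one index x. -/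
/-- A path of length `len` in a graph with edge relation `E`, from `v` to `w`:
a graph homomorphism `L_len → G`. Values of `toFun` beyond `len` are irrelevant. -/
structure GPath {V : Type*} (E : V → V → Prop) (v w : V) where
  len : ℕ
  toFun : ℕ → V
  src : toFun 0 = v
  tgt : toFun len = w
  adj : ∀ i < len, E (toFun i) (toFun (i + 1))

/-- Generating relation of 2-homotopy of paths: (i) insertion of a back-and-forth step,
or (ii) equal lengths with `φ × ψ` sending edges of `L_n` to edges of `G`. -/
def HtpyStep {V : Type*} (E : V → V → Prop) {v w : V} (φ ψ : GPath E v w) : Prop :=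
  (φ.len + 2 = ψ.len ∧ ∃ x ≤ φ.len,
      (∀ i ≤ x, φ.toFun i = ψ.toFun i) ∧ ∀ i, x ≤ i → i ≤ φ.len → φ.toFun i = ψ.toFun (i + 2)) ∨
  (φ.len = ψ.len ∧ ∀ i < φ.len,
      E (φ.toFun i) (ψ.toFun (i + 1)) ∧ E (φ.toFun (i + 1)) (ψ.toFun i))

/-- 2-homotopy of paths: the equivalence relation generated by `HtpyStep`. -/
def Htpy {V : Type*} (E : V → V → Prop) {v w : V} : GPath E v w → GPath E v w → Prop :=
  Relation.EqvGen (HtpyStep E)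

/-- Concatenation of paths: `ψ` first (from `u` to `v`), then `φ` (from `v` to `w`). -/
def GPath.comp {V : Type*} {E : V → V → Prop} {u v w : V}
    (φ : GPath E v w) (ψ : GPath E u v) : GPath E u w where
  len := ψ.len + φ.len
  toFun := fun i => if i < ψ.len then ψ.toFun i else φ.toFun (i - ψ.len)
  src := by
    by_cases h : 0 < ψ.len
    · simpa [h] using ψ.src
    · have h0 : ψ.len = 0 := by omega
      have h1 : u = v := by
        have ht := ψ.tgt
        rw [h0] at ht
        rw [← ψ.src]
        exact ht
      simp [h, h0, φ.src, h1]
  tgt := by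
    have h : ¬ (ψ.len + φ.len < ψ.len) := by omega
    simp [h, φ.tgt]
  adj := by
    intro i hi
    by_cases h1 : i + 1 < ψ.len
    · have h0 : i < ψ.len := by omega
      simpa [h0, h1] using ψ.adj i h0
    · by_cases h0 : i < ψ.len
      · have he : i + 1 = ψ.len := by omega
        have : φ.toFun (i + 1 - ψ.len) = ψ.toFun (i + 1) := by
          rw [he, Nat.sub_self, φ.src, ψ.tgt]
        simp only [h0, h1, if_pos, if_neg, not_false_iff]
        rw [this]
        exact ψ.adj i h0
      · have hh : ¬ (i + 1 < ψ.len) := h1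
        have hs : i + 1 - ψ.len = (i - ψ.len) + 1 := by omega
        simp only [h0, hh, if_neg, not_false_iff]
        rw [hs]
        exact φ.adj (i - ψ.len) (by omega)

/-- The image of a path under a graph homomorphism. -/
def GPath.map {V W : Type*} {E : V → V → Prop} {F : W → W → Prop} {v w : V}
    (p : V → W) (hp : ∀ x y, E x y → F (p x) (p y)) (φ : GPath E v w) :
    GPath F (p v) (p w) where
  len := φ.len
  toFun := fun i => p (φ.toFun i)
  src := by simp [φ.src]
  tgt := by simp [φ.tgt]
  adj := fun i hi => hp _ _ (φ.adj i hi)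

/-- The constant path of length 0. -/
def GPath.const {V : Type*} (E : V → V → Prop) (v : V) : GPath E v v :=
  ⟨0, fun _ => v, rfl, rfl, fun i h => absurd h (Nat.not_lt_zero i)⟩

/-- The alternative generating relation: (i) as in `HtpyStep`, or (ii)'
equal lengths and the two paths differ at at most one vertex. -/
def HtpyStep' {V : Type*} (E : V → V → Prop) {v w : V} (φ ψ : GPath E v w) : Prop :=
  (φ.len + 2 = ψ.len ∧ ∃ x ≤ φ.len,
      (∀ i ≤ x, φ.toFun i = ψ.toFun i) ∧ ∀ i, x ≤ i → i ≤ φ.len → φ.toFun i = ψ.toFun (i + 2)) ∨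
  (φ.len = ψ.len ∧ ∃ x, ∀ i ≤ φ.len, i ≠ x → φ.toFun i = ψ.toFun i)

namespace GPath

variable {V : Type*} {E : V → V → Prop} {v w : V}

def splice (φ ψ : GPath E v w) (hlen : φ.len = ψ.len)
    (hcross : ∀ i < φ.len, E (φ.toFun i) (ψ.toFun (i + 1))) (k : ℕ) : GPath E v w where
  len := ψ.len
  toFun i := if i < k then φ.toFun i else ψ.toFun i
  src := by
    split_ifs
    · exact φ.src
    · exact ψ.src
  tgt := by
    split_ifs
    · rw [← hlen]; exact φ.tgt
    · exact ψ.tgt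
  adj i hi := by
    split_ifs with h₀ h₁ h₁
    · exact φ.adj i (hlen ▸ hi)
    · exact hcross i (hlen ▸ hi)
    · omega
    · exact ψ.adj i hi

end GPath

section

variable {V : Type*} {E : V → V → Prop} {v w : V}

open GPath

lemma htpyStep'_of_eqOn {φ ψ : GPath E v w} (hlen : φ.len = ψ.len)
    (heq : ∀ i ≤ φ.len, φ.toFun i = ψ.toFun i) : HtpyStep' E φ ψ :=
  Or.inr ⟨hlen, 0, fun i hi _ => heq i hi⟩

lemma htpyStep'_splice_succ (φ ψ : GPath E v w) (hlen : φ.len = ψ.len)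
    (hcross : ∀ i < φ.len, E (φ.toFun i) (ψ.toFun (i + 1))) (k : ℕ) :
    HtpyStep' E (splice φ ψ hlen hcross (k + 1)) (splice φ ψ hlen hcross k) := by
  refine Or.inr ⟨rfl, k, fun i _ hik => ?_⟩
  have : i < k + 1 ↔ i < k := by omega
  simp only [splice, this]

lemma eqvGen_htpyStep'_splice (φ ψ : GPath E v w) (hlen : φ.len = ψ.len)
    (hcross : ∀ i < φ.len, E (φ.toFun i) (ψ.toFun (i + 1))) (k : ℕ) :
    Relation.EqvGen (HtpyStep' E) (splice φ ψ hlen hcross k) ψ := by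
  induction k with
  | zero => exact .rel _ _ (htpyStep'_of_eqOn rfl fun i _ => by simp [splice])
  | succ k ih => exact .trans _ _ _ (.rel _ _ (htpyStep'_splice_succ φ ψ hlen hcross k)) ih

/-- A step (ii) is a chain of steps (ii)': replace the vertices of `φ` by those of `ψ`
from the right, one at a time. -/
lemma eqvGen_htpyStep'_of_htpyStep {φ ψ : GPath E v w} (h : HtpyStep E φ ψ) :
    Relation.EqvGen (HtpyStep' E) φ ψ := by
  rcases h with hins | ⟨hlen, hedge⟩
  · exact .rel _ _ (Or.inl hins)
  · have hcross : ∀ i < φ.len, E (φ.toFun i) (ψ.toFun (i + 1)) := fun i hi => (hedge i hi).1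
    have hφ : HtpyStep' E φ (splice φ ψ hlen hcross (φ.len + 1)) :=
      htpyStep'_of_eqOn hlen fun i hi => by
        simp only [splice, if_pos (Nat.lt_succ_of_le hi)]
    exact .trans _ _ _ (.rel _ _ hφ) (eqvGen_htpyStep'_splice φ ψ hlen hcross _)

/-- Away from the changed vertex `x`, the edges required by (ii) are edges of `φ` or `ψ`,
possibly reversed. -/
lemma htpyStep_of_htpyStep' (hsymm : ∀ x y, E x y → E y x) {φ ψ : GPath E v w}
    (h : HtpyStep' E φ ψ) : HtpyStep E φ ψ := by
  rcases h with hins | ⟨hlen, x, heq⟩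
  · exact Or.inl hins
  · refine Or.inr ⟨hlen, fun i hi => ⟨?_, ?_⟩⟩
    · by_cases hx : i + 1 = x
      · rw [heq i hi.le (by omega)]
        exact ψ.adj i (hlen ▸ hi)
      · rw [← heq (i + 1) hi hx]
        exact φ.adj i hi
    · by_cases hx : i = x
      · rw [heq (i + 1) hi (by omega)]
        exact hsymm _ _ (ψ.adj i (hlen ▸ hi))
      · rw [← heq i hi.le hx]
        exact hsymm _ _ (φ.adj i hi)

end

/-- the equivalence relation generated by (i) and (ii)' coincides with
the 2-homotopy relation generated by (i) and (ii). -/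
theorem eqvGen_htpyStep'_iff_htpy {V : Type*} (E : V → V → Prop)
    (hsymm : ∀ x y, E x y → E y x) {v w : V} (φ ψ : GPath E v w) :
    Relation.EqvGen (HtpyStep' E) φ ψ ↔ Htpy E φ ψ :=
  ⟨Relation.EqvGen.mono (fun _ _ => htpyStep_of_htpyStep' hsymm) φ ψ,
    Relation.EqvGen.eqvGen_le (fun _ _ => eqvGen_htpyStep'_of_htpyStep) φ ψ⟩
end

section
/- Path lifting respects 2-homotopy: let p : (G,v) → (H,w) be a based 2-covering map and φ, ψ paths in H starting at w with φ ≃ ψ (2-homotopic). Then the unique lifts φ̃, ψ̃ starting at v have the same terminal point, and φ̃ ≃ ψ̃. -/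
/-!
Since `p` is injective on every neighbourhood `N(x)`, a lift of a path is determined by its
starting point; since `p` is also onto `N(p x)`, lifts exist. Hence "the lifts have the same
terminal point and are 2-homotopic" is an equivalence relation on paths of `H` from `p v`, and it
suffices to check it on one generating step. A back-and-forth step `y, z, y` lifts to a walk
`y', z', y''` with `p y' = p y''`, and injectivity of `p` on `N(z')` forces `y' = y''`. For an
equal-length step, the rungs of the ladder between the two lifts are built one index at a time:
each rung is the lift of the corresponding edge of `H`, and its endpoint is identified with a
vertex of the other lift because both lie in `N₂` of an earlier vertex, where `p` is injective.
-/

section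

variable {VG VH : Type*} {E : VG → VG → Prop} {F : VH → VH → Prop} {p : VG → VH}

def IsLift (p : VG → VH) {v a : VG} {w u : VH} (φ' : GPath E v a) (φ : GPath F w u) : Prop :=
  φ'.len = φ.len ∧ ∀ i ≤ φ.len, p (φ'.toFun i) = φ.toFun i

theorem GPath.htpyStep_of_eqOn (hEsymm : ∀ x y, E x y → E y x) {v a : VG}
    {φ' ψ' : GPath E v a} (hlen : φ'.len = ψ'.len)
    (heq : ∀ i ≤ φ'.len, φ'.toFun i = ψ'.toFun i) : HtpyStep E φ' ψ' :=
  Or.inr ⟨hlen, fun i hi =>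
    ⟨heq (i + 1) hi ▸ φ'.adj i hi, heq i hi.le ▸ hEsymm _ _ (φ'.adj i hi)⟩⟩

namespace IsTwoCovering

theorem eq_of_adj_of_adj (hp : IsTwoCovering E F p) {x y z : VG} (hy : E x y) (hz : E x z)
    (h : p y = p z) : y = z :=
  (hp.2 x).1.injOn hy hz h

theorem eq_of_mem_nbhd2 (hp : IsTwoCovering E F p) {x y z : VG} (hy : y ∈ Nbhd2 E x)
    (hz : z ∈ Nbhd2 E x) (h : p y = p z) : y = z :=
  (hp.2 x).2.injOn hy hz h

theorem exists_adj_map_eq (hp : IsTwoCovering E F p) {x : VG} {w : VH} (h : F (p x) w) :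
    ∃ y, E x y ∧ p y = w :=
  (hp.2 x).1.surjOn h

theorem adj_of_map_adj_s14 (hp : IsTwoCovering E F p) {c x y : VG} (hx : E c x)
    (hy : y ∈ Nbhd2 E c) (h : F (p x) (p y)) : E x y := by
  obtain ⟨z, hxz, hz⟩ := hp.exists_adj_map_eq h
  rwa [← hp.eq_of_mem_nbhd2 ⟨x, hx, hxz⟩ hy hz]

theorem seq_eq_of_map_eq (hp : IsTwoCovering E F p) {f g : ℕ → VG} {m n : ℕ}
    (hf : ∀ i, m ≤ i → i < n → E (f i) (f (i + 1)))
    (hg : ∀ i, m ≤ i → i < n → E (g i) (g (i + 1)))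
    (hm : f m = g m) (hfg : ∀ i, m ≤ i → i ≤ n → p (f i) = p (g i)) :
    ∀ i, m ≤ i → i ≤ n → f i = g i := by
  intro i hmi
  induction i, hmi using Nat.le_induction with
  | base => exact fun _ => hm
  | succ i hmi ih =>
    intro hin
    have hi : f i = g i := ih (by omega)
    exact hp.eq_of_adj_of_adj (hf i hmi hin) (hi ▸ hg i hmi hin) (hfg _ (by omega) hin)

theorem exists_isLift (hp : IsTwoCovering E F p) (v : VG) {u : VH} (φ : GPath F (p v) u) :
    ∃ (a : VG) (φ' : GPath E v a), IsLift p φ' φ := by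
  have hstep : ∀ x w, ∃ y, F (p x) w → E x y ∧ p y = w := fun x w =>
    (em (F (p x) w)).elim (fun h => (hp.exists_adj_map_eq h).imp fun _ hy _ => hy)
      (fun h => ⟨x, fun h' => (h h').elim⟩)
  choose next hnext using hstep
  let f : ℕ → VG := fun n => Nat.rec v (fun k x => next x (φ.toFun (k + 1))) n
  have hproj : ∀ i ≤ φ.len, p (f i) = φ.toFun i := by
    intro i
    induction i with
    | zero => exact fun _ => φ.src.symm
    | succ i ih =>
      intro hi
      exact (hnext _ _ (ih (by omega) ▸ φ.adj i (by omega))).2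
  have hadj : ∀ i < φ.len, E (f i) (f (i + 1)) := fun i hi =>
    (hnext _ _ (hproj i hi.le ▸ φ.adj i hi)).1
  exact ⟨f φ.len, ⟨φ.len, f, rfl, rfl, hadj⟩, rfl, hproj⟩

variable {v a b : VG} {w u : VH} {φ ψ : GPath F w u} {φ' : GPath E v a} {ψ' : GPath E v b}

theorem isLift_eq_of_eq (hp : IsTwoCovering E F p) (hφ : IsLift p φ' φ) (hψ : IsLift p ψ' ψ)
    {x : ℕ} (hxφ : x ≤ φ.len) (hxψ : x ≤ ψ.len) (heq : ∀ i ≤ x, φ.toFun i = ψ.toFun i) :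
    ∀ i ≤ x, φ'.toFun i = ψ'.toFun i := by
  have hφlen : φ'.len = φ.len := hφ.1
  have hψlen : ψ'.len = ψ.len := hψ.1
  intro i hi
  refine hp.seq_eq_of_map_eq (m := 0) (fun j _ hj => φ'.adj j (by omega))
    (fun j _ hj => ψ'.adj j (by omega)) (φ'.src.trans ψ'.src.symm) (fun j _ hj => ?_) i
    (Nat.zero_le i) hi
  rw [hφ.2 j (by omega), hψ.2 j (by omega), heq j hj]

theorem isLift_backtrack (hp : IsTwoCovering E F p) (hEsymm : ∀ x y, E x y → E y x)
    (hφ : IsLift p φ' φ) (hψ : IsLift p ψ' ψ) (hlen : φ.len + 2 = ψ.len) {x : ℕ}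
    (hx : x ≤ φ.len) (hlow : ∀ i ≤ x, φ.toFun i = ψ.toFun i)
    (hhigh : ∀ i, x ≤ i → i ≤ φ.len → φ.toFun i = ψ.toFun (i + 2)) :
    (∀ i ≤ x, φ'.toFun i = ψ'.toFun i) ∧
      ∀ i, x ≤ i → i ≤ φ.len → φ'.toFun i = ψ'.toFun (i + 2) := by
  have hφlen : φ'.len = φ.len := hφ.1
  have hψlen : ψ'.len = ψ.len := hψ.1
  have hlow' := hp.isLift_eq_of_eq hφ hψ hx (by omega) hlow
  have hback : ψ'.toFun (x + 2) = ψ'.toFun x :=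
    hp.eq_of_adj_of_adj (ψ'.adj (x + 1) (by omega)) (hEsymm _ _ (ψ'.adj x (by omega)))
      (by rw [hψ.2 _ (by omega), hψ.2 _ (by omega), ← hhigh x le_rfl hx, hlow x le_rfl])
  refine ⟨hlow', hp.seq_eq_of_map_eq (g := fun i => ψ'.toFun (i + 2))
    (fun i _ hi => φ'.adj i (by omega)) (fun i _ hi => ψ'.adj (i + 2) (by omega))
    (by rw [hlow' x le_rfl, hback]) (fun i hxi hi => ?_)⟩
  rw [hφ.2 i (by omega), hψ.2 _ (by omega), hhigh i hxi hi]

theorem isLift_ladder (hp : IsTwoCovering E F p) (hEsymm : ∀ x y, E x y → E y x)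
    (hφ : IsLift p φ' φ) (hψ : IsLift p ψ' ψ) (hlen : φ.len = ψ.len)
    (hF : ∀ i < φ.len, F (φ.toFun i) (ψ.toFun (i + 1)) ∧ F (φ.toFun (i + 1)) (ψ.toFun i)) :
    ∀ i < φ.len, E (φ'.toFun i) (ψ'.toFun (i + 1)) ∧ E (φ'.toFun (i + 1)) (ψ'.toFun i) := by
  have hφlen : φ'.len = φ.len := hφ.1
  have hψlen : ψ'.len = ψ.len := hψ.1
  intro i
  induction i with
  | zero =>
    intro h0
    have h0' := φ'.adj 0 (by omega)
    have h1' := ψ'.adj 0 (by omega)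
    rw [φ'.src] at h0' ⊢
    rw [ψ'.src] at h1' ⊢
    exact ⟨h1', hEsymm _ _ h0'⟩
  | succ k ih =>
    intro hk
    obtain ⟨hrung, hrung'⟩ := ih (by omega)
    constructor
    · refine hp.adj_of_map_adj_s14 (φ'.adj k (by omega)) ⟨_, hrung, ψ'.adj (k + 1) (by omega)⟩ ?_
      rw [hφ.2 _ (by omega), hψ.2 _ (by omega)]
      exact (hF (k + 1) hk).1
    · refine hp.adj_of_map_adj_s14 (φ'.adj (k + 1) (by omega)) ⟨_, hrung', ψ'.adj k (by omega)⟩ ?_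
      rw [hφ.2 _ (by omega), hψ.2 _ (by omega)]
      exact (hF (k + 1) hk).2

theorem lift_refl (hp : IsTwoCovering E F p) (hEsymm : ∀ x y, E x y → E y x)
    (hφ : IsLift p φ' φ) (hψ : IsLift p ψ' φ) :
    a = b ∧ ∀ hab : a = b, HtpyStep E (hab ▸ φ') ψ' := by
  have heq := hp.isLift_eq_of_eq hφ hψ le_rfl le_rfl fun _ _ => rfl
  obtain rfl : a = b := by rw [← φ'.tgt, ← ψ'.tgt, hφ.1, hψ.1, heq _ le_rfl]
  exact ⟨rfl, fun _ => show HtpyStep E φ' ψ' from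
    GPath.htpyStep_of_eqOn hEsymm (hφ.1.trans hψ.1.symm) (hφ.1 ▸ heq)⟩

theorem lift_htpyStep (hp : IsTwoCovering E F p) (hEsymm : ∀ x y, E x y → E y x)
    (hφ : IsLift p φ' φ) (hψ : IsLift p ψ' ψ) (h : HtpyStep F φ ψ) :
    a = b ∧ ∀ hab : a = b, HtpyStep E (hab ▸ φ') ψ' := by
  have hφlen : φ'.len = φ.len := hφ.1
  have hψlen : ψ'.len = ψ.len := hψ.1
  rcases h with ⟨hlen, x, hx, hlow, hhigh⟩ | ⟨hlen, hF⟩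
  · obtain ⟨hlow', hhigh'⟩ := hp.isLift_backtrack hEsymm hφ hψ hlen hx hlow hhigh
    obtain rfl : a = b := by rw [← φ'.tgt, ← ψ'.tgt, hφlen, hψlen, ← hlen, hhigh' _ hx le_rfl]
    exact ⟨rfl, fun _ => show HtpyStep E φ' ψ' from Or.inl ⟨by omega, x, by omega, hlow',
      fun i hxi hi => hhigh' i hxi (by omega)⟩⟩
  · have hladder := hp.isLift_ladder hEsymm hφ hψ hlen hF
    obtain rfl : a = b := by
      rw [← φ'.tgt, ← ψ'.tgt, hφlen, hψlen, ← hlen]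
      rcases hn : φ.len with _ | m
      · exact φ'.src.trans ψ'.src.symm
      · refine hp.eq_of_adj_of_adj (φ'.adj m (by omega)) (hladder m (by omega)).1 ?_
        rw [hφ.2 _ (by omega), hψ.2 _ (by omega), ← hn, φ.tgt, hlen, ψ.tgt]
    exact ⟨rfl, fun _ => show HtpyStep E φ' ψ' from
      Or.inr ⟨by omega, fun i hi => hladder i (by omega)⟩⟩

end IsTwoCovering

end

theorem two_covering_lift_htpy_general {VG VH : Type*}
    (E : VG → VG → Prop) (F : VH → VH → Prop)
    (hEsymm : ∀ x y, E x y → E y x)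
    (p : VG → VH) (hp : IsTwoCovering E F p) (v : VG) {u : VH}
    (φ ψ : GPath F (p v) u) (h : Htpy F φ ψ)
    {a b : VG} (φ' : GPath E v a) (ψ' : GPath E v b)
    (hφ : φ'.len = φ.len ∧ ∀ i ≤ φ.len, p (φ'.toFun i) = φ.toFun i)
    (hψ : ψ'.len = ψ.len ∧ ∀ i ≤ ψ.len, p (ψ'.toFun i) = ψ.toFun i) :
    a = b ∧ ∀ hab : a = b, Htpy E (hab ▸ φ') ψ' := by
  induction h generalizing a b with
  | rel φ ψ hstep =>
    obtain ⟨rfl, hstep'⟩ := hp.lift_htpyStep hEsymm hφ hψ hstep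
    exact ⟨rfl, fun _ => .rel _ _ (hstep' rfl)⟩
  | refl φ =>
    obtain ⟨rfl, hstep'⟩ := hp.lift_refl hEsymm hφ hψ
    exact ⟨rfl, fun _ => .rel _ _ (hstep' rfl)⟩
  | symm φ ψ _ ih =>
    obtain ⟨rfl, hψφ⟩ := ih ψ' φ' hψ hφ
    exact ⟨rfl, fun _ => .symm _ _ (hψφ rfl)⟩
  | trans φ χ ψ _ _ ih₁ ih₂ =>
    obtain ⟨c, χ', hχ⟩ := hp.exists_isLift v χ
    obtain ⟨rfl, hφχ⟩ := ih₁ φ' χ' hφ hχ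
    obtain ⟨rfl, hχψ⟩ := ih₂ χ' ψ' hχ hψ
    exact ⟨rfl, fun _ => .trans _ _ _ (hφχ rfl) (hχψ rfl)⟩

/-- path lifting respects 2-homotopy: lifts (starting at `v`) of
2-homotopic paths of `H` have the same terminal point and are 2-homotopic. -/
theorem two_covering_lift_htpy {VG VH : Type*}
    (E : VG → VG → Prop) (F : VH → VH → Prop)
    (hEsymm : ∀ x y, E x y → E y x) (hFsymm : ∀ x y, F x y → F y x)
    (p : VG → VH) (hp : IsTwoCovering E F p) (v : VG) {u : VH}
    (φ ψ : GPath F (p v) u) (h : Htpy F φ ψ)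
    {a b : VG} (φ' : GPath E v a) (ψ' : GPath E v b)
    (hφ : φ'.len = φ.len ∧ ∀ i ≤ φ.len, p (φ'.toFun i) = φ.toFun i)
    (hψ : ψ'.len = ψ.len ∧ ∀ i ≤ ψ.len, p (ψ'.toFun i) = ψ.toFun i) :
    a = b ∧ ∀ hab : a = b, Htpy E (hab ▸ φ') ψ' :=
  two_covering_lift_htpy_general E F hEsymm p hp v φ ψ h φ' ψ' hφ hψ
end

section
/- For n ≥ 4, the even part π₁²(K_n,0)_ev of the 2-fundamental group of the complete graph K_n is trivial; consequently π₁²(K_n,0) ≅ ℤ/2ℤ. -/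
/-- The edge relation of the complete graph `K_n`, on vertex set `{0, …, n-1} ⊆ ℕ`. -/
def KnE (n : ℕ) (x y : ℕ) : Prop := x < n ∧ y < n ∧ x ≠ y

/-!
In `K_n` a single interior vertex of a path may be replaced by any vertex adjacent to both of its
neighbours; this is a 2-homotopy of type (ii). Since `n ≥ 4`, some vertex always avoids three
given ones, so a path can be moved vertex by vertex, from left to right, onto any other path with
the same endpoints and length: when the target vertex coincides with the next vertex of the path,
that next vertex is first pushed aside. Prepending a back-and-forth step changes the length by 2,
so two loops are 2-homotopic exactly when their lengths have the same parity, and the parity of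
the length is a 2-homotopy invariant.
-/

namespace GPath

variable {V : Type*} {E : V → V → Prop} {u v w : V}

theorem htpyStep_of_eqOn_ne [Std.Symm E] {φ ψ : GPath E v w} (hlen : φ.len = ψ.len)
    (j : ℕ) (h : ∀ i ≤ φ.len, i ≠ j → φ.toFun i = ψ.toFun i) : HtpyStep E φ ψ := by
  refine Or.inr ⟨hlen, fun i hi => ⟨?_, ?_⟩⟩
  · by_cases hij : i + 1 = j
    · rw [h i hi.le (by omega)]
      exact ψ.adj i (hlen ▸ hi)
    · rw [← h (i + 1) hi hij]
      exact φ.adj i hi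
  · by_cases hij : i = j
    · rw [h (i + 1) hi (by omega)]
      exact symm (ψ.adj i (hlen ▸ hi))
    · rw [← h i hi.le hij]
      exact symm (φ.adj i hi)

def update (φ : GPath E v w) (j : ℕ) (b : V) (hj0 : j ≠ 0) (hj : j < φ.len)
    (h₁ : E (φ.toFun (j - 1)) b) (h₂ : E b (φ.toFun (j + 1))) : GPath E v w where
  len := φ.len
  toFun := Function.update φ.toFun j b
  src := by rw [Function.update_of_ne (Ne.symm hj0)]; exact φ.src
  tgt := by rw [Function.update_of_ne hj.ne']; exact φ.tgt
  adj i hi := by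
    by_cases hij : i = j
    · subst hij
      rw [Function.update_self, Function.update_of_ne (by omega)]
      exact h₂
    · by_cases hij1 : i + 1 = j
      · rw [Function.update_of_ne hij, hij1, Function.update_self,
          show i = j - 1 by omega]
        exact h₁
      · rw [Function.update_of_ne hij, Function.update_of_ne hij1]
        exact φ.adj i hi

theorem htpyStep_update [Std.Symm E] (φ : GPath E v w) (j : ℕ) (b : V) (hj0 : j ≠ 0)
    (hj : j < φ.len) (h₁ : E (φ.toFun (j - 1)) b) (h₂ : E b (φ.toFun (j + 1))) :
    HtpyStep E φ (φ.update j b hj0 hj h₁ h₂) :=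
  htpyStep_of_eqOn_ne rfl j fun _ _ hij => (Function.update_of_ne hij _ _).symm

def backtrack (h₁ : E v u) (h₂ : E u v) : GPath E v v where
  len := 2
  toFun i := if i = 1 then u else v
  src := rfl
  tgt := rfl
  adj i hi := by
    interval_cases i
    · exact h₁
    · exact h₂

theorem htpyStep_comp_backtrack (φ : GPath E v w) (h₁ : E v u) (h₂ : E u v) :
    HtpyStep E φ (φ.comp (backtrack h₁ h₂)) := by
  refine Or.inl ⟨Nat.add_comm _ _, 0, Nat.zero_le _, fun i hi => ?_, fun i _ _ => ?_⟩
  · obtain rfl : i = 0 := Nat.le_zero.mp hi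
    simp [comp, backtrack, φ.src]
  · simp [comp, backtrack]

end GPath

theorem Htpy.len_modEq {V : Type*} {E : V → V → Prop} {v w : V} {φ ψ : GPath E v w}
    (h : Htpy E φ ψ) : φ.len ≡ ψ.len [MOD 2] := by
  induction h with
  | rel φ ψ hstep =>
    rcases hstep with ⟨hlen, -⟩ | ⟨hlen, -⟩
    · rw [← hlen]
      exact (Nat.add_mod_right _ _).symm
    · rw [hlen]
  | refl => rfl
  | symm _ _ _ ih => exact ih.symm
  | trans _ _ _ _ _ ih₁ ih₂ => exact ih₁.trans ih₂

namespace KnE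

variable {n : ℕ}

instance : Std.Symm (KnE n) := ⟨fun _ _ h => ⟨h.2.1, h.1, h.2.2.symm⟩⟩

theorem exists_fresh (hn : 4 ≤ n) (x y z : ℕ) : ∃ c < n, c ≠ x ∧ c ≠ y ∧ c ≠ z := by
  by_contra! h
  have := h 0; have := h 1; have := h 2; have := h 3
  omega

def triangle (hn : 3 ≤ n) : GPath (KnE n) 0 0 where
  len := 3
  toFun i := i % 3
  src := rfl
  tgt := rfl
  adj i _ := ⟨by omega, by omega, by omega⟩

variable {v w : ℕ}

theorem exists_htpyStep_toFun_succ_ne (hn : 4 ≤ n) (φ : GPath (KnE n) v w) {j : ℕ}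
    (hj : j + 1 < φ.len) (b : ℕ) :
    ∃ φ' : GPath (KnE n) v w, HtpyStep (KnE n) φ φ' ∧ φ'.len = φ.len ∧
      (∀ i ≤ j, φ'.toFun i = φ.toFun i) ∧ φ'.toFun (j + 1) ≠ b := by
  obtain ⟨c, hc, hcj, hcj2, hcb⟩ := exists_fresh hn (φ.toFun j) (φ.toFun (j + 2)) b
  have h₁ : KnE n (φ.toFun (j + 1 - 1)) c := ⟨(φ.adj j (by omega)).1, hc, hcj.symm⟩
  have h₂ : KnE n c (φ.toFun (j + 1 + 1)) := ⟨hc, (φ.adj (j + 1) hj).2.1, hcj2⟩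
  refine ⟨φ.update (j + 1) c (by omega) hj h₁ h₂, GPath.htpyStep_update _ _ _ _ _ _ _, rfl,
    fun i hi => Function.update_of_ne (by omega) _ _, ?_⟩
  simpa [GPath.update] using hcb

theorem exists_htpy_eqOn_lt_succ (hn : 4 ≤ n) {φ ψ : GPath (KnE n) v w}
    (hlen : φ.len = ψ.len) {j : ℕ} (hj0 : j ≠ 0) (hj : j < φ.len)
    (h : ∀ i < j, φ.toFun i = ψ.toFun i) :
    ∃ φ' : GPath (KnE n) v w, Htpy (KnE n) φ φ' ∧ φ'.len = ψ.len ∧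
      ∀ i < j + 1, φ'.toFun i = ψ.toFun i := by
  obtain ⟨φ₁, hφ₁, hlen₁, hagree₁, hne⟩ : ∃ φ₁ : GPath (KnE n) v w,
      Htpy (KnE n) φ φ₁ ∧ φ₁.len = φ.len ∧ (∀ i ≤ j, φ₁.toFun i = φ.toFun i) ∧
        φ₁.toFun (j + 1) ≠ ψ.toFun j := by
    by_cases hj1 : j + 1 < φ.len
    · obtain ⟨φ₁, hstep, hrest⟩ := exists_htpyStep_toFun_succ_ne hn φ hj1 (ψ.toFun j)
      exact ⟨φ₁, .rel _ _ hstep, hrest⟩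
    -- `j + 1` is the common endpoint, where `φ` and `ψ` already agree
    · refine ⟨φ, .refl _, rfl, fun _ _ => rfl, ?_⟩
      have hend : j + 1 = ψ.len := by omega
      have hψ := (ψ.adj j (by omega)).2.2
      rw [hend, ψ.tgt] at hψ
      rw [hend, ← hlen, φ.tgt]
      exact hψ.symm
  have hprev : φ₁.toFun (j - 1) = ψ.toFun (j - 1) := by
    rw [hagree₁ _ (by omega), h _ (by omega)]
  have h₁ : KnE n (φ₁.toFun (j - 1)) (ψ.toFun j) := by
    rw [hprev, show j = j - 1 + 1 by omega]
    exact ψ.adj _ (by omega)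
  have h₂ : KnE n (ψ.toFun j) (φ₁.toFun (j + 1)) :=
    ⟨(ψ.adj j (by omega)).1, (φ₁.adj j (by omega)).2.1, hne.symm⟩
  refine ⟨φ₁.update j (ψ.toFun j) hj0 (by omega) h₁ h₂,
    hφ₁.trans _ _ _ (.rel _ _ (GPath.htpyStep_update _ _ _ _ _ _ _)), hlen₁.trans hlen,
    fun i hi => ?_⟩
  rcases Nat.lt_succ_iff_lt_or_eq.mp hi with hi | rfl
  · simp [GPath.update, Function.update_of_ne hi.ne, hagree₁ i hi.le, h i hi]
  · simp [GPath.update]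

theorem htpy_of_len_eq (hn : 4 ≤ n) {φ ψ : GPath (KnE n) v w} (hlen : φ.len = ψ.len) :
    Htpy (KnE n) φ ψ := by
  have hprefix : ∀ j ≤ φ.len, ∃ φ' : GPath (KnE n) v w,
      Htpy (KnE n) φ φ' ∧ φ'.len = ψ.len ∧ ∀ i < j, φ'.toFun i = ψ.toFun i := by
    intro j
    induction j with
    | zero => exact fun _ => ⟨φ, .refl _, hlen, fun _ hi => absurd hi (Nat.not_lt_zero _)⟩
    | succ j ih =>
      intro hj
      obtain ⟨φ', hφ', hlen', hagree⟩ := ih (by omega)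
      rcases Nat.eq_zero_or_pos j with rfl | hj0
      · refine ⟨φ', hφ', hlen', fun i hi => ?_⟩
        rw [Nat.lt_one_iff.mp hi, φ'.src, ψ.src]
      · obtain ⟨φ'', hφ'', hrest⟩ :=
          exists_htpy_eqOn_lt_succ hn hlen' hj0.ne' (by omega) hagree
        exact ⟨φ'', hφ'.trans _ _ _ hφ'', hrest⟩
  obtain ⟨φ', hφ', hlen', hagree⟩ := hprefix φ.len le_rfl
  exact hφ'.trans _ _ _ <| .rel _ _ <|
    GPath.htpyStep_of_eqOn_ne hlen' φ'.len fun i hi hij => hagree i (by omega)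

theorem htpy_of_len_modEq (hn : 4 ≤ n) (hv : v < n) {φ ψ : GPath (KnE n) v w}
    (hlen : φ.len ≡ ψ.len [MOD 2]) : Htpy (KnE n) φ ψ := by
  obtain ⟨u, hu, hne, -⟩ := exists_fresh hn v v v
  have hpad : ∀ k, ∀ φ ψ : GPath (KnE n) v w, ψ.len = φ.len + 2 * k →
      Htpy (KnE n) φ ψ := by
    intro k
    induction k with
    | zero => exact fun φ ψ h => htpy_of_len_eq hn h.symm
    | succ k ih =>
      intro φ ψ h
      let φ₂ := φ.comp (GPath.backtrack (E := KnE n) ⟨hv, hu, hne.symm⟩ ⟨hu, hv, hne⟩)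
      exact (Relation.EqvGen.rel _ _ (GPath.htpyStep_comp_backtrack _ _ _)).trans _ φ₂ _
        (ih φ₂ ψ (by simp only [φ₂, GPath.comp, GPath.backtrack]; omega))
  unfold Nat.ModEq at hlen
  rcases le_total φ.len ψ.len with hle | hle
  · exact hpad ((ψ.len - φ.len) / 2) φ ψ (by omega)
  · exact (hpad ((φ.len - ψ.len) / 2) ψ φ (by omega)).symm

end KnE

/-- for n ≥ 4, the even part of `π₁²(K_n, 0)` is trivial (every even
loop is 2-homotopic to the constant loop), and `π₁²(K_n, 0) ≅ ℤ/2ℤ` (there is a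
bijection to `ZMod 2` turning concatenation into addition). -/
theorem pi2_complete_graph (n : ℕ) (hn : 4 ≤ n) :
    (∀ φ : GPath (KnE n) 0 0, Even φ.len → Htpy (KnE n) φ (GPath.const (KnE n) 0)) ∧
    ∃ e : Quot (Htpy (KnE n) (v := 0) (w := 0)) ≃ ZMod 2,
      ∀ φ ψ : GPath (KnE n) 0 0,
        e (Quot.mk _ (φ.comp ψ)) = e (Quot.mk _ φ) + e (Quot.mk _ ψ) := by
  have h0 : 0 < n := by omega
  refine ⟨fun φ hφ => KnE.htpy_of_len_modEq hn h0 (Nat.even_iff.mp hφ), ?_⟩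
  let parity : Quot (Htpy (KnE n) (v := 0) (w := 0)) → ZMod 2 :=
    Quot.lift (fun φ => (φ.len : ZMod 2))
      fun _ _ h => (ZMod.natCast_eq_natCast_iff _ _ _).mpr h.len_modEq
  have hinj : parity.Injective := by
    rintro ⟨φ⟩ ⟨ψ⟩ h
    exact Quot.sound (KnE.htpy_of_len_modEq hn h0 ((ZMod.natCast_eq_natCast_iff _ _ _).mp h))
  have hsurj : parity.Surjective := by
    intro k
    fin_cases k
    · exact ⟨Quot.mk _ (GPath.const _ 0), rfl⟩
    · exact ⟨Quot.mk _ (KnE.triangle (by omega)), show ((3 : ℕ) : ZMod 2) = 1 by decide⟩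
  refine ⟨Equiv.ofBijective parity ⟨hinj, hsurj⟩, fun φ ψ => ?_⟩
  change ((ψ.len + φ.len : ℕ) : ZMod 2) = φ.len + ψ.len
  rw [Nat.cast_add, add_comm]
end

section
/- The 2-fundamental group of the infinite path graph L (vertices ℤ, edges between consecutive integers) based at 0 is trivial: every loop at 0 is 2-homotopic to the constant path. -/
/-- Edge relation of the infinite path graph `L` on ℤ. -/
def lineE (x y : ℤ) : Prop := y = x + 1 ∨ x = y + 1

namespace GPath

variable {V : Type*} {E : V → V → Prop} {v w : V}

def HasBacktrackAt (φ : GPath E v w) (k : ℕ) : Prop :=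
  k + 2 ≤ φ.len ∧ φ.toFun k = φ.toFun (k + 2)

def eraseBacktrack (φ : GPath E v w) (k : ℕ) (hk : φ.HasBacktrackAt k) : GPath E v w where
  len := φ.len - 2
  toFun j := if j ≤ k then φ.toFun j else φ.toFun (j + 2)
  src := by simp [φ.src]
  tgt := by
    obtain ⟨hk, heq⟩ := hk
    split_ifs with h
    · rw [show φ.len - 2 = k by omega, heq, show k + 2 = φ.len by omega, φ.tgt]
    · rw [show φ.len - 2 + 2 = φ.len by omega, φ.tgt]
  adj j hj := by
    obtain ⟨hk, heq⟩ := hk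
    by_cases hjk : j + 1 ≤ k
    · simpa only [if_pos hjk, if_pos (show j ≤ k by omega)] using φ.adj j (by omega)
    · by_cases hj' : j ≤ k
      · obtain rfl : j = k := by omega
        simpa only [if_pos hj', if_neg hjk, heq] using φ.adj (j + 2) (by omega)
      · simpa only [if_neg hj', if_neg hjk] using φ.adj (j + 2) (by omega)

theorem len_eraseBacktrack (φ : GPath E v w) (k : ℕ) (hk : φ.HasBacktrackAt k) :
    (φ.eraseBacktrack k hk).len + 2 = φ.len := by
  simp only [eraseBacktrack]
  have := hk.1
  omega

theorem htpyStep_eraseBacktrack (φ : GPath E v w) (k : ℕ) (hk : φ.HasBacktrackAt k) :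
    HtpyStep E (φ.eraseBacktrack k hk) φ := by
  have hlen := φ.len_eraseBacktrack k hk
  refine Or.inl ⟨hlen, k, by have := hk.1; omega, fun i hi => if_pos hi, fun i hki _ => ?_⟩
  by_cases hik : i ≤ k
  · obtain rfl : i = k := by omega
    exact (if_pos hik).trans hk.2
  · exact if_neg hik

theorem htpy_const_of_len_eq_zero (φ : GPath E v v) (h : φ.len = 0) :
    Htpy E φ (GPath.const E v) :=
  Relation.EqvGen.rel _ _ (Or.inr ⟨h, fun i hi => absurd hi (by omega)⟩)

theorem htpy_const_of_forall_exists_hasBacktrackAt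
    (hback : ∀ φ : GPath E v v, 0 < φ.len → ∃ k, φ.HasBacktrackAt k)
    (φ : GPath E v v) : Htpy E φ (GPath.const E v) := by
  induction hn : φ.len using Nat.strong_induction_on generalizing φ with
  | _ n ih =>
    rcases Nat.eq_zero_or_pos n with rfl | hpos
    · exact htpy_const_of_len_eq_zero φ hn
    obtain ⟨k, hk⟩ := hback φ (hn ▸ hpos)
    have hlen := φ.len_eraseBacktrack k hk
    have hshorter : Htpy E (φ.eraseBacktrack k hk) (GPath.const E v) :=
      ih (n - 2) (by omega) _ (by omega)
    exact (Relation.EqvGen.rel _ _ (htpyStep_eraseBacktrack φ k hk)).symm.trans _ _ _ hshorter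

end GPath

theorem lineE_iff {x y : ℤ} : lineE x y ↔ y - x = 1 ∨ y - x = -1 := by
  unfold lineE; omega

theorem GPath.lineE_toFun_eq_of_forall_not_hasBacktrackAt {v w : ℤ} (φ : GPath lineE v w)
    (hno : ∀ k, ¬ φ.HasBacktrackAt k) :
    ∀ i ≤ φ.len, φ.toFun i = v + i * (φ.toFun 1 - φ.toFun 0) := by
  have hstep : ∀ i, i < φ.len → φ.toFun (i + 1) - φ.toFun i = φ.toFun 1 - φ.toFun 0 := by
    intro i hi
    induction i with
    | zero => rfl
    | succ j ih =>
      -- two consecutive steps of `±1` that do not cancel are equal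
      have h₁ := lineE_iff.mp (φ.adj j (by omega))
      have h₂ := lineE_iff.mp (φ.adj (j + 1) hi)
      have hne : φ.toFun j ≠ φ.toFun (j + 1 + 1) := fun h => hno j ⟨by omega, h⟩
      have := ih (by omega)
      omega
  intro i hi
  induction i with
  | zero => simp [φ.src]
  | succ j ih =>
    have := hstep j (by omega)
    rw [ih (by omega)] at this
    push_cast
    linarith

theorem GPath.lineE_exists_hasBacktrackAt {v : ℤ} (φ : GPath lineE v v) (hpos : 0 < φ.len) :
    ∃ k, φ.HasBacktrackAt k := by
  by_contra! hno
  have hlin := φ.lineE_toFun_eq_of_forall_not_hasBacktrackAt hno φ.len le_rfl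
  have hfirst : φ.toFun 1 - φ.toFun 0 = 1 ∨ φ.toFun 1 - φ.toFun 0 = -1 :=
    lineE_iff.mp (φ.adj 0 hpos)
  rw [φ.tgt] at hlin
  have : (φ.len : ℤ) * (φ.toFun 1 - φ.toFun 0) = 0 := by linarith
  rcases mul_eq_zero.mp this with h | h <;> omega

/-- the 2-fundamental group of the infinite path graph `L` at 0 is
trivial: every loop at 0 is 2-homotopic to the constant path. -/
theorem pi2_line_trivial (φ : GPath lineE (0 : ℤ) 0) :
    Htpy lineE φ (GPath.const lineE 0) :=
  GPath.htpy_const_of_forall_exists_hasBacktrackAt GPath.lineE_exists_hasBacktrackAt φ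
end
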